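/- arXiv:1602.03453 — 7 statements merged into one kernel-verified Lean document; each statement's English description precedes it below -/
import Mathlib

section
/- For any nontrivial additive character ψ of 𝔽_q, any multiplicative character χ of 𝔽_q^×, and positive integers b_1,…,b_n, one has ∑_{a ∈ 𝔽_q^×} χ(a) Kl_a^n(ψ; b_1,…,b_n) = ∏_{i=1}^n G(χ^{b_i}, ψ), where G denotes the Gauss sum. -/
/-- The generalized Kloosterman sum Kl_a^n(ψ; b₁, …, b_n)
= ∑_{x₁^{b₁} ⋯ x_n^{b_n} = a} ψ(x₁ + ⋯ + x_n). -/
noncomputable def Kl {F : Type*} [Field F] [Fintype F] [DecidableEq F]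
    (ψ : AddChar F ℂ) (n : ℕ) (b : Fin n → ℕ) (a : F) : ℂ :=
  ∑ x ∈ Finset.univ.filter (fun x : Fin n → F => ∏ i, x i ^ b i = a), ψ (∑ i, x i)

/-- Gauss sum over the units of a finite field. -/
noncomputable def GaussSumUnits {F : Type*} [Field F] [Fintype F] [DecidableEq F]
    (χ : MulChar F ℂ) (ψ : AddChar F ℂ) : ℂ :=
  ∑ t : Fˣ, χ (t : F) * ψ (t : F)

/-!
Expanding each Kloosterman sum and summing over `a` turns the left side into a free sum over
all `x ∈ 𝔽_qⁿ` of `χ(∏ xᵢ^{bᵢ}) ψ(∑ xᵢ) = ∏ χ^{bᵢ}(xᵢ) ψ(xᵢ)`, which factors as the product of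
the Gauss sums. The term `a = 0` vanishes because `χ(0) = 0`; the identity
`χ^{bᵢ}(xᵢ) = χ(xᵢ)^{bᵢ}` at `xᵢ = 0` needs `bᵢ ≠ 0`, as `χ⁰` is the trivial character, which
vanishes at `0`.
-/

open Finset

lemma AddChar.map_sum_eq_prod {A M ι : Type*} [AddCommMonoid A] [CommMonoid M]
    (ψ : AddChar A M) (s : Finset ι) (f : ι → A) : ψ (∑ i ∈ s, f i) = ∏ i ∈ s, ψ (f i) := by
  induction s using Finset.cons_induction with
  | empty => simp
  | cons a s h ih => rw [sum_cons, prod_cons, map_add_eq_mul, ih]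

lemma Fintype.sum_units_val_eq_sum {R M : Type*} [Monoid R] [Fintype R] [DecidableEq R]
    [AddCommMonoid M] (f : R → M) (hf : ∀ a, ¬IsUnit a → f a = 0) : ∑ u : Rˣ, f u = ∑ a, f a := by
  refine (sum_map univ ⟨Units.val, Units.val_injective⟩ f).symm.trans <|
    Finset.sum_subset (subset_univ _) fun a _ ha => hf a fun hu => ha ?_
  exact mem_map.mpr ⟨hu.unit, mem_univ _, rfl⟩

lemma gaussSumUnits_eq_gaussSum {F : Type*} [Field F] [Fintype F] [DecidableEq F]
    (χ : MulChar F ℂ) (ψ : AddChar F ℂ) : GaussSumUnits χ ψ = gaussSum χ ψ :=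
  Fintype.sum_units_val_eq_sum (fun a => χ a * ψ a) fun a ha => by
    rw [χ.map_nonunit ha, zero_mul]

lemma sum_mul_Kl {F : Type*} [Field F] [Fintype F] [DecidableEq F]
    (ψ : AddChar F ℂ) (n : ℕ) (b : Fin n → ℕ) (f : F → ℂ) :
    ∑ a, f a * Kl ψ n b a = ∑ x : Fin n → F, f (∏ i, x i ^ b i) * ψ (∑ i, x i) := by
  simp only [Kl, mul_sum]
  rw [← sum_fiberwise univ (fun x : Fin n → F => ∏ i, x i ^ b i)]
  refine sum_congr rfl fun a _ => sum_congr rfl fun x hx => ?_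
  rw [(mem_filter.mp hx).2]

theorem stmt4_general {F : Type*} [Field F] [Fintype F] [DecidableEq F]
    (ψ : AddChar F ℂ) (χ : MulChar F ℂ) (n : ℕ)
    (b : Fin n → ℕ) (hb : ∀ i, 0 < b i) :
    ∑ a : Fˣ, χ (a : F) * Kl ψ n b (a : F) = ∏ i, GaussSumUnits (χ ^ b i) ψ := by
  rw [Fintype.sum_units_val_eq_sum (fun a => χ a * Kl ψ n b a)
    fun a ha => by rw [χ.map_nonunit ha, zero_mul], sum_mul_Kl]
  simp only [gaussSumUnits_eq_gaussSum, gaussSum, Fintype.prod_sum]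
  refine sum_congr rfl fun x _ => ?_
  rw [map_prod, AddChar.map_sum_eq_prod, ← prod_mul_distrib]
  exact prod_congr rfl fun i _ => by rw [MulChar.pow_apply' χ (hb i).ne', map_pow]

/-- ∑_{a ∈ 𝔽_q^×} χ(a) Kl_a^n(ψ; b₁, …, b_n) = ∏_{i=1}^n G(χ^{bᵢ}, ψ). -/
theorem stmt4 {F : Type*} [Field F] [Fintype F] [DecidableEq F]
    (ψ : AddChar F ℂ) (hψ : ψ ≠ 1) (χ : MulChar F ℂ) (n : ℕ)
    (b : Fin n → ℕ) (hb : ∀ i, 0 < b i) :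
    ∑ a : Fˣ, χ (a : F) * Kl ψ n b (a : F) = ∏ i, GaussSumUnits (χ ^ b i) ψ :=
  stmt4_general ψ χ n b hb
end

section
/- For a nontrivial additive character ψ of 𝔽_q and positive integers b_1,…,b_n, the function a ↦ Kl_a^n(ψ; b_1,…,b_n) is not constant on 𝔽_q^×. -/
open Finset

lemma MulChar.exists_ne_one {M R : Type*} [CommMonoid M] [Finite M] [Nontrivial Mˣ]
    [Field R] [IsSepClosed R] [CharZero R] : ∃ χ : MulChar M R, χ ≠ 1 := by
  obtain ⟨u, hu⟩ := exists_ne (1 : Mˣ)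
  obtain ⟨χ, hχ⟩ := MulChar.exists_apply_ne_one_of_hasEnoughRootsOfUnity M R
    (a := (u : M)) (by simpa using hu)
  exact ⟨χ, fun h => hχ (by rw [h, MulChar.one_apply u.isUnit])⟩

lemma MulChar.sum_mul_eq_zero_of_forall_units_eq {M R : Type*} [CommMonoid M] [Fintype M]
    [CommRing R] [IsDomain R] {χ : MulChar M R} (hχ : χ ≠ 1) {f : M → R}
    (hf : ∀ u v : Mˣ, f u = f v) : ∑ a, χ a * f a = 0 :=
  calc ∑ a, χ a * f a = ∑ a, χ a * f 1 := sum_congr rfl fun a _ => by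
        by_cases ha : IsUnit a
        · rw [← ha.unit_spec, hf ha.unit 1, Units.val_one]
        · rw [χ.map_nonunit ha, zero_mul, zero_mul]
    _ = 0 := by rw [← sum_mul, MulChar.sum_eq_zero_of_ne_one hχ, zero_mul]

lemma gaussSum_ne_zero_of_ne_one {F R : Type*} [Field F] [Fintype F] [CommRing R] [IsDomain R]
    (hF : (Fintype.card F : R) ≠ 0) (χ : MulChar F R) {ψ : AddChar F R} (hψ : ψ ≠ 1) :
    gaussSum χ ψ ≠ 0 := by
  by_cases hχ : χ = 1
  · rw [hχ, gaussSum_one_left hψ]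
    exact neg_ne_zero.mpr one_ne_zero
  · exact gaussSum_ne_zero_of_nontrivial hF hχ (AddChar.IsPrimitive.of_ne_one hψ)

theorem sum_mulChar_mul_Kl {F : Type*} [Field F] [Fintype F] [DecidableEq F]
    (ψ : AddChar F ℂ) (χ : MulChar F ℂ) {n : ℕ} {b : Fin n → ℕ} (hb : ∀ i, 0 < b i) :
    ∑ a, χ a * Kl ψ n b a = ∏ i, gaussSum (χ ^ b i) ψ := by
  have twist (a : F) : χ a * Kl ψ n b a
      = ∑ x ∈ univ.filter (fun x : Fin n → F => ∏ i, x i ^ b i = a),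
          ∏ i, (χ ^ b i) (x i) * ψ (x i) := by
    rw [Kl, mul_sum]
    refine sum_congr rfl fun x hx => ?_
    rw [← (mem_filter.mp hx).2, map_prod, ψ.map_sum_eq_prod, ← prod_mul_distrib]
    refine prod_congr rfl fun i _ => ?_
    -- `hb` matters at `x i = 0`: `χ ^ 0` is the trivial character, which vanishes there.
    rw [map_pow, MulChar.pow_apply' χ (hb i).ne']
  simp_rw [twist]
  rw [sum_fiberwise]
  simp only [gaussSum]
  rw [prod_univ_sum, Fintype.piFinset_univ]

theorem stmt5_general {F : Type*} [Field F] [Fintype F] [DecidableEq F]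
    (hq : 2 < Fintype.card F)
    (ψ : AddChar F ℂ) (hψ : ψ ≠ 1) (n : ℕ)
    (b : Fin n → ℕ) (hb : ∀ i, 0 < b i) :
    ¬ ∀ a₁ a₂ : Fˣ, Kl ψ n b (a₁ : F) = Kl ψ n b (a₂ : F) := by
  intro hconst
  have : Nontrivial Fˣ := Fintype.one_lt_card_iff_nontrivial.mp (by rw [Fintype.card_units]; omega)
  obtain ⟨χ, hχ⟩ := MulChar.exists_ne_one (M := F) (R := ℂ)
  have hvanish := MulChar.sum_mul_eq_zero_of_forall_units_eq hχ hconst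
  rw [sum_mulChar_mul_Kl ψ χ hb] at hvanish
  refine prod_ne_zero_iff.mpr (fun i _ => ?_) hvanish
  exact gaussSum_ne_zero_of_ne_one (Nat.cast_ne_zero.mpr Fintype.card_ne_zero) _ hψ

/-- For a nontrivial additive character ψ of 𝔽_q (q > 2) and positive integers
b₁, …, b_n, the function a ↦ Kl_a^n(ψ; b₁, …, b_n) is not constant on 𝔽_q^×. -/
theorem stmt5 {F : Type*} [Field F] [Fintype F] [DecidableEq F]
    (hq : 2 < Fintype.card F)
    (ψ : AddChar F ℂ) (hψ : ψ ≠ 1) (n : ℕ) (hn : 0 < n)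
    (b : Fin n → ℕ) (hb : ∀ i, 0 < b i) :
    ¬ ∀ a₁ a₂ : Fˣ, Kl ψ n b (a₁ : F) = Kl ψ n b (a₂ : F) :=
  stmt5_general hq ψ hψ n b hb
end

section
/- For a nontrivial additive character ψ of 𝔽_q and positive integers b_1,…,b_n, there exists a ∈ 𝔽_q^× such that Kl_a^n(ψ; b_1,…,b_n) ≠ 0. -/
/-!
Summing `Kl_a` over all `a ≠ 0` removes the constraint on the product: since every `b_i > 0`,
`∏ x_i ^ b_i ≠ 0` exactly when every `x_i ≠ 0`, so the total is
`(∑_{y ≠ 0} ψ y) ^ n = (-1) ^ n`, by orthogonality of the nontrivial character `ψ`.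
-/

open Finset

namespace AddChar

lemma map_sum_eq_prod_s6 {A M ι : Type*} [AddCommMonoid A] [CommMonoid M] (ψ : AddChar A M)
    (s : Finset ι) (f : ι → A) : ψ (∑ i ∈ s, f i) = ∏ i ∈ s, ψ (f i) := by
  classical
  induction s using Finset.cons_induction with
  | empty => simp
  | cons a s ha ih => rw [sum_cons, prod_cons, map_add_eq_mul, ih]

lemma sum_erase_zero_eq_neg_one {R R' : Type*} [AddGroup R] [Fintype R] [DecidableEq R]
    [CommRing R'] [IsDomain R'] {ψ : AddChar R R'} (hψ : ψ ≠ 1) :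
    ∑ a ∈ univ.erase 0, ψ a = -1 := by
  rw [sum_erase_eq_sub (mem_univ 0), sum_eq_zero_of_ne_one hψ, map_zero_eq_one, zero_sub]

end AddChar

lemma sum_units_eq_sum_erase_zero {G₀ M : Type*} [GroupWithZero G₀] [Fintype G₀] [DecidableEq G₀]
    [AddCommMonoid M] (f : G₀ → M) : ∑ a : G₀ˣ, f a = ∑ a ∈ univ.erase 0, f a := by
  refine sum_nbij' (↑) (fun a => if h : a = 0 then 1 else Units.mk0 a h) ?_ ?_ ?_ ?_ ?_ <;>
    simp +contextual

lemma prod_pow_ne_zero_iff {ι M₀ : Type*} [Fintype ι] [CommMonoidWithZero M₀] [Nontrivial M₀]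
    [NoZeroDivisors M₀] {b : ι → ℕ} (hb : ∀ i, 0 < b i) {x : ι → M₀} :
    ∏ i, x i ^ b i ≠ 0 ↔ ∀ i, x i ≠ 0 := by
  simp [prod_ne_zero_iff, (hb _).ne']

lemma sum_erase_zero_Kl_eq_pow {F : Type*} [Field F] [Fintype F] [DecidableEq F]
    (ψ : AddChar F ℂ) {n : ℕ} {b : Fin n → ℕ} (hb : ∀ i, 0 < b i) :
    ∑ a ∈ univ.erase 0, Kl ψ n b a = (∑ y ∈ univ.erase 0, ψ y) ^ n := by
  have hsupport : univ.filter (fun x : Fin n → F => ∏ i, x i ^ b i ∈ univ.erase 0)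
      = Fintype.piFinset fun _ => univ.erase 0 := by
    ext x
    simp [prod_pow_ne_zero_iff hb]
  unfold Kl
  rw [sum_fiberwise_eq_sum_filter, hsupport, ← Fin.prod_const, ← sum_prod_piFinset]
  exact sum_congr rfl fun x _ => ψ.map_sum_eq_prod_s6 _ _

theorem stmt6_general {F : Type*} [Field F] [Fintype F] [DecidableEq F]
    (ψ : AddChar F ℂ) (hψ : ψ ≠ 1) (n : ℕ)
    (b : Fin n → ℕ) (hb : ∀ i, 0 < b i) :
    ∃ a : Fˣ, Kl ψ n b (a : F) ≠ 0 := by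
  have hsum : ∑ a : Fˣ, Kl ψ n b a = (-1) ^ n := by
    rw [sum_units_eq_sum_erase_zero, sum_erase_zero_Kl_eq_pow ψ hb,
      AddChar.sum_erase_zero_eq_neg_one hψ]
  obtain ⟨a, -, ha⟩ :=
    exists_ne_zero_of_sum_ne_zero (hsum ▸ pow_ne_zero n (neg_ne_zero.2 one_ne_zero))
  exact ⟨a, ha⟩

/-- For a nontrivial additive character ψ and positive integers b₁, …, b_n,
there exists a ∈ 𝔽_q^× with Kl_a^n(ψ; b₁, …, b_n) ≠ 0. -/
theorem stmt6 {F : Type*} [Field F] [Fintype F] [DecidableEq F]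
    (ψ : AddChar F ℂ) (hψ : ψ ≠ 1) (n : ℕ) (hn : 0 < n)
    (b : Fin n → ℕ) (hb : ∀ i, 0 < b i) :
    ∃ a : Fˣ, Kl ψ n b (a : F) ≠ 0 :=
  stmt6_general ψ hψ n b hb
end

section
/- With θ(g) = J ᵗg^{-1} J^{-1} on GL_{2n}(F), the element g = 1 + ϕ_u satisfies θ(g) = 1 + ϕ_u + ϕ_u² + ⋯ = (1 − ϕ_u)^{-1}, so g commutes with θ(g), and N(g) := g·θ(g) = (1−ϖu)^{-1} · M, where M is the matrix with diagonal entries 1+ϖu, strictly upper triangular entries all equal to 2, and strictly lower triangular entries all equal to 2ϖu. -/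
/-- Let θ(g) = J ᵗg⁻¹ J⁻¹ on GL_{2n}(F), with J the antidiagonal matrix with
(i, 2n+1-i)-entry (-1)^{i-1}, and ϕ the matrix with superdiagonal entries 1 and
(2n,1)-entry c = ϖu (with 1 - c ≠ 0). Then for g = 1 + ϕ one has
θ(g) = (1 - ϕ)⁻¹ (the sum of the geometric series 1 + ϕ + ϕ² + ⋯), g commutes
with θ(g), and N(g) = g·θ(g) = (1 - c)⁻¹ · M where M has diagonal entries
1 + c, strictly upper triangular entries 2, and strictly lower triangular
entries 2c. -/
theorem stmt12 {F : Type*} [Field F] {n : ℕ} (hn : 0 < n)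
    (c : F) (hc : c ≠ 0) (hc1 : 1 - c ≠ 0)
    (phi J M : Matrix (Fin (2 * n)) (Fin (2 * n)) F)
    (hphi : phi = Matrix.of fun (i j : Fin (2 * n)) =>
      if (i : ℕ) + 1 = (j : ℕ) then 1
      else if (i : ℕ) = 2 * n - 1 ∧ (j : ℕ) = 0 then c
      else 0)
    (hJ : J = Matrix.of fun (i j : Fin (2 * n)) =>
      if (i : ℕ) + (j : ℕ) = 2 * n - 1 then (-1 : F) ^ (i : ℕ) else 0)
    (hM : M = Matrix.of fun (i j : Fin (2 * n)) =>
      if i = j then 1 + c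
      else if (i : ℕ) < (j : ℕ) then 2
      else 2 * c) :
    J * ((1 + phi).transpose)⁻¹ * J⁻¹ = (1 - phi)⁻¹ ∧
    (1 + phi) * (J * ((1 + phi).transpose)⁻¹ * J⁻¹)
      = (J * ((1 + phi).transpose)⁻¹ * J⁻¹) * (1 + phi) ∧
    (1 + phi) * (J * ((1 + phi).transpose)⁻¹ * J⁻¹) = (1 - c)⁻¹ • M := by
  have hN : 0 < 2 * n := by omega
  set A : Matrix (Fin (2 * n)) (Fin (2 * n)) F :=
    Matrix.of (fun i j => if (i : ℕ) ≤ (j : ℕ) then (1 : F) else c) with hA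
  -- arithmetic helper
  have hmod : ∀ i : Fin (2 * n), ((i : ℕ) + 1) % (2 * n)
      = if (i : ℕ) = 2 * n - 1 then 0 else (i : ℕ) + 1 := by
    intro i; have hi := i.isLt
    by_cases h : (i : ℕ) = 2 * n - 1
    · rw [if_pos h, h]
      have h2 : 2 * n - 1 + 1 = 2 * n := by omega
      rw [h2, Nat.mod_self]
    · rw [if_neg h]; exact Nat.mod_eq_of_lt (by omega)
  -- left multiplication by phi
  have hphiL : ∀ (X : Matrix (Fin (2 * n)) (Fin (2 * n)) F) (i j : Fin (2 * n)),
      (phi * X) i j = (if (i : ℕ) = 2 * n - 1 then c else 1) *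
        X ⟨((i : ℕ) + 1) % (2 * n), Nat.mod_lt _ hN⟩ j := by
    intro X i j
    have hi := i.isLt
    rw [Matrix.mul_apply,
      Finset.sum_eq_single (⟨((i : ℕ) + 1) % (2 * n), Nat.mod_lt _ hN⟩ : Fin (2 * n))]
    · congr 1
      rw [hphi]; simp only [Matrix.of_apply, Fin.val_mk]
      by_cases h : (i : ℕ) = 2 * n - 1
      · rw [if_pos h]
        have hm : ((i : ℕ) + 1) % (2 * n) = 0 := by
          rw [show (i : ℕ) + 1 = 2 * n by omega, Nat.mod_self]
        simp only [hm]
        split_ifs <;> first | rfl | omega | tauto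
      · rw [if_neg h]
        have hm : ((i : ℕ) + 1) % (2 * n) = (i : ℕ) + 1 := Nat.mod_eq_of_lt (by omega)
        simp only [hm]
        split_ifs <;> first | rfl | omega | tauto
    · intro b _ hb
      have hb' : (b : ℕ) ≠ ((i : ℕ) + 1) % (2 * n) := fun h => hb (Fin.ext h)
      have hbb := b.isLt
      rw [hmod i] at hb'
      have hz : phi i b = 0 := by
        rw [hphi]; simp only [Matrix.of_apply]
        by_cases h : (i : ℕ) = 2 * n - 1
        · rw [if_pos h] at hb'
          split_ifs with h1 h2
          · omega
          · omega
          · rfl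
        · rw [if_neg h] at hb'
          split_ifs with h1 h2
          · omega
          · omega
          · rfl
      rw [hz, zero_mul]
    · intro h; exact absurd (Finset.mem_univ _) h
  -- left multiplication by J
  have hJL : ∀ (X : Matrix (Fin (2 * n)) (Fin (2 * n)) F) (i j : Fin (2 * n)),
      (J * X) i j = (-1 : F) ^ (i : ℕ) *
        X ⟨2 * n - 1 - (i : ℕ), by omega⟩ j := by
    intro X i j
    have hi := i.isLt
    rw [Matrix.mul_apply,
      Finset.sum_eq_single (⟨2 * n - 1 - (i : ℕ), by omega⟩ : Fin (2 * n))]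
    · congr 1
      rw [hJ]; simp only [Matrix.of_apply, Fin.val_mk]
      rw [if_pos (by omega)]
    · intro b _ hb
      have hb' : (b : ℕ) ≠ 2 * n - 1 - (i : ℕ) := fun h => hb (Fin.ext h)
      have hbb := b.isLt
      have hz : J i b = 0 := by
        rw [hJ]; simp only [Matrix.of_apply]
        rw [if_neg (by omega)]
      rw [hz, zero_mul]
    · intro h; exact absurd (Finset.mem_univ _) h
  -- J * J = -1
  have hJJ : J * (-J) = 1 := by
    have : J * J = -1 := by
      ext i j
      have hi := i.isLt; have hj := j.isLt
      rw [hJL]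
      rw [hJ]; simp only [Matrix.of_apply, Fin.val_mk, Matrix.neg_apply, Matrix.one_apply]
      by_cases h : 2 * n - 1 - (i : ℕ) + (j : ℕ) = 2 * n - 1
      · rw [if_pos h, if_pos (by apply Fin.ext; omega), ← pow_add]
        have he : (i : ℕ) + (2 * n - 1 - (i : ℕ)) = 2 * n - 1 := by omega
        rw [he]
        have hodd : Odd (2 * n - 1) := ⟨n - 1, by omega⟩
        rw [hodd.neg_one_pow]
      · rw [if_neg h, mul_zero, if_neg (by intro hij; apply h; rw [Fin.ext_iff] at hij; omega),
          neg_zero]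
    rw [mul_neg, this, neg_neg]
  have hJdet : IsUnit J.det := Matrix.isUnit_det_of_right_inverse hJJ
  have hJr : J * J⁻¹ = 1 := Matrix.mul_nonsing_inv _ hJdet
  have hJl : J⁻¹ * J = 1 := Matrix.nonsing_inv_mul _ hJdet
  -- (1 - phi) * A = (1 - c) • 1
  have h2 : (1 - phi) * A = (1 - c) • 1 := by
    ext i j
    have hi := i.isLt; have hj := j.isLt
    rw [Matrix.sub_mul, Matrix.one_mul, Matrix.sub_apply, hphiL, Matrix.smul_apply,
      Matrix.one_apply, hA]
    simp only [Matrix.of_apply, Fin.val_mk, smul_eq_mul]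
    simp only [hmod i]
    by_cases hij : i = j
    · have hv : (i : ℕ) = (j : ℕ) := by rw [hij]
      rw [if_pos hij]
      split_ifs <;> first | ring1 | (exfalso; omega)
    · have hv : (i : ℕ) ≠ (j : ℕ) := fun h => hij (Fin.ext h)
      rw [if_neg hij]
      split_ifs <;> first | ring1 | (exfalso; omega)
  -- (1 + phi) * A = M
  have h4 : (1 + phi) * A = M := by
    ext i j
    have hi := i.isLt; have hj := j.isLt
    rw [Matrix.add_mul, Matrix.one_mul, Matrix.add_apply, hphiL, hA, hM]
    simp only [Matrix.of_apply, Fin.val_mk]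
    simp only [hmod i]
    by_cases hij : i = j
    · have hv : (i : ℕ) = (j : ℕ) := by rw [hij]
      rw [if_pos hij]
      split_ifs <;> first | ring1 | (exfalso; omega)
    · have hv : (i : ℕ) ≠ (j : ℕ) := fun h => hij (Fin.ext h)
      rw [if_neg hij]
      split_ifs <;> first | ring1 | (exfalso; omega)
  -- inverse of (1 - phi)
  have hS : (1 - phi) * ((1 - c)⁻¹ • A) = 1 := by
    rw [Matrix.mul_smul, h2, smul_smul, inv_mul_cancel₀ hc1, one_smul]
  have hdetphi : IsUnit (1 - phi).det := Matrix.isUnit_det_of_right_inverse hS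
  have hSinv : (1 - phi)⁻¹ = (1 - c)⁻¹ • A := Matrix.inv_eq_right_inv hS
  -- J * (1+phi)ᵀ = (1-phi) * J
  have hJT : J * (1 + phi).transpose = (1 - phi) * J := by
    rw [Matrix.transpose_add, Matrix.transpose_one, Matrix.mul_add, Matrix.mul_one,
      Matrix.sub_mul, Matrix.one_mul]
    have key : J * phi.transpose = -(phi * J) := by
      ext i j
      have hi := i.isLt; have hj := j.isLt
      rw [Matrix.neg_apply, hJL, hphiL, Matrix.transpose_apply]
      rw [hphi, hJ]
      simp only [Matrix.of_apply, Fin.val_mk]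
      rw [hmod i]
      by_cases h1 : (i : ℕ) = 2 * n - 1 <;> by_cases h2 : (j : ℕ) = 2 * n - 1
      · rw [if_pos h1, if_pos h1]
        rw [if_neg (by omega), if_pos (by omega), if_pos (by omega)]
        have hodd : Odd (2 * n - 1) := ⟨n - 1, by omega⟩
        rw [h1, hodd.neg_one_pow, pow_zero]
        ring
      · rw [if_pos h1, if_pos h1]
        rw [if_neg (by omega), if_neg (by omega), if_neg (by omega)]
        ring
      · rw [if_neg h1, if_neg h1]
        rw [if_neg (by omega), if_neg (by omega), if_neg (by omega)]
        ring
      · rw [if_neg h1, if_neg h1]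
        by_cases h3 : (j : ℕ) + 1 = 2 * n - 1 - (i : ℕ)
        · rw [if_pos h3, if_pos (by omega), pow_succ]
          ring
        · rw [if_neg h3, if_neg (by omega), if_neg (by omega)]
          ring
    rw [key, sub_eq_add_neg]
  -- det of (1+phi)ᵀ is a unit
  have hdetT : IsUnit ((1 + phi).transpose).det := by
    have hdJ : J.det ≠ 0 := hJdet.ne_zero
    have h := congrArg Matrix.det hJT
    rw [Matrix.det_mul, Matrix.det_mul] at h
    have he : ((1 + phi).transpose).det = (1 - phi).det :=
      mul_left_cancel₀ hdJ (h.trans (mul_comm _ _))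
    rw [he]; exact hdetphi
  have hTl : ((1 + phi).transpose)⁻¹ * (1 + phi).transpose = 1 :=
    Matrix.nonsing_inv_mul _ hdetT
  -- main identity 1
  have main1 : J * ((1 + phi).transpose)⁻¹ * J⁻¹ = (1 - phi)⁻¹ := by
    refine (Matrix.inv_eq_left_inv ?_).symm
    have h1p : (1 - phi) = J * (1 + phi).transpose * J⁻¹ := by
      rw [hJT, Matrix.mul_assoc, hJr, Matrix.mul_one]
    calc J * ((1 + phi).transpose)⁻¹ * J⁻¹ * (1 - phi)
        = J * (((1 + phi).transpose)⁻¹ * ((J⁻¹ * J) *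
            ((1 + phi).transpose * J⁻¹))) := by
          rw [h1p]; simp only [Matrix.mul_assoc]
      _ = 1 := by
          rw [hJl, Matrix.one_mul,
            ← Matrix.mul_assoc (((1 + phi).transpose)⁻¹) ((1 + phi).transpose) J⁻¹,
            hTl, Matrix.one_mul, hJr]
  -- commuting
  have hl := Matrix.nonsing_inv_mul _ hdetphi
  have hr := Matrix.mul_nonsing_inv _ hdetphi
  have hc0 : (1 - phi) * (1 + phi) = (1 + phi) * (1 - phi) := by noncomm_ring
  have hcomm : (1 + phi) * (1 - phi)⁻¹ = (1 - phi)⁻¹ * (1 + phi) := by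
    calc (1 + phi) * (1 - phi)⁻¹
        = ((1 - phi)⁻¹ * (1 - phi)) * ((1 + phi) * (1 - phi)⁻¹) := by
          rw [hl, Matrix.one_mul]
      _ = (1 - phi)⁻¹ * (((1 - phi) * (1 + phi)) * (1 - phi)⁻¹) := by
          simp only [Matrix.mul_assoc]
      _ = (1 - phi)⁻¹ * ((1 + phi) * ((1 - phi) * (1 - phi)⁻¹)) := by
          rw [hc0]; simp only [Matrix.mul_assoc]
      _ = (1 - phi)⁻¹ * (1 + phi) := by rw [hr, Matrix.mul_one]
  refine ⟨main1, ?_, ?_⟩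
  · rw [main1]; exact hcomm
  · rw [main1, hSinv, Matrix.mul_smul, h4]
end

section
/- Let h ∈ SO_{2n+1}(O_F) be an affine generic element of the pro-unipotent Iwahori radical. Then h has an eigenvector v with eigenvalue 1 which can be normalized so that v ∈ O^{2n+1}, v_1 = 1, and v_2 ≡ ⋯ ≡ v_{2n+1} ≡ 0 mod p. -/
/-!
Since `h` preserves a nondegenerate form in odd dimension and `det h = 1`, `det (h - 1) = 0`
(this is where `2 ≠ 0` enters), so over the DVR `h` fixes a primitive vector `u`. Modulo `𝔪`,
`h - 1` is strictly upper triangular with nonzero entries at `(i, i + 1)` for `i < n`.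
From `(h - 1) u = 0`, the last nonzero coordinate of `ū` is either `0` or beyond `n`. Since `h`
preserves the form, `J u` is fixed by `hᵀ`, and the transposed argument shows that the first
nonzero coordinate of `J ū` is at least `n`, i.e. `ū` vanishes beyond `n`. Hence `ū` is supported
on coordinate `0`, so `u 0` is a unit and `(u 0)⁻¹ • u` is the required eigenvector.
-/

open Matrix IsLocalRing

section Primitive

variable {R : Type*} [CommRing R] {ι : Type*}

theorem exists_eq_smul_and_span_range_eq_top [IsDomain R] [IsPrincipalIdealRing R] [Fintype ι]
    {w : ι → R} (hw : w ≠ 0) :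
    ∃ d : R, d ≠ 0 ∧ ∃ u : ι → R, w = d • u ∧ Ideal.span (Set.range u) = ⊤ := by
  obtain ⟨d, hd⟩ := (IsPrincipalIdealRing.principal (Ideal.span (Set.range w))).principal
  have hspan : Ideal.span (Set.range w) = Ideal.span {d} := hd
  have hdvd (i : ι) : d ∣ w i :=
    Ideal.mem_span_singleton.mp (hspan ▸ Ideal.subset_span (Set.mem_range_self i))
  choose u hu using hdvd
  have hwu : w = d • u := funext hu
  have hd0 : d ≠ 0 := by
    rintro rfl
    exact hw (by simpa using hwu)
  obtain ⟨c, hc⟩ := Ideal.mem_span_range_iff_exists_fun.mp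
    (hspan ▸ Ideal.mem_span_singleton_self d)
  have hcu : ∑ i, c i * u i = 1 := by
    refine mul_left_cancel₀ hd0 ?_
    calc d * ∑ i, c i * u i = ∑ i, c i * w i := by
          rw [Finset.mul_sum]
          exact Finset.sum_congr rfl fun i _ => by rw [hu i]; ring
      _ = d * 1 := by rw [hc, mul_one]
  refine ⟨d, hd0, u, hwu, (Ideal.eq_top_iff_one _).mpr ?_⟩
  rw [← hcu]
  exact Ideal.sum_mem _ fun i _ => Ideal.mul_mem_left _ _ (Ideal.subset_span ⟨i, rfl⟩)

theorem IsLocalRing.exists_isUnit_of_span_range_eq_top [IsLocalRing R] {u : ι → R}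
    (hu : Ideal.span (Set.range u) = ⊤) : ∃ i, IsUnit (u i) := by
  by_contra! hnon
  refine (maximalIdeal.isMaximal R).ne_top (top_le_iff.mp (hu ▸ Ideal.span_le.mpr ?_))
  rintro _ ⟨i, rfl⟩
  exact (mem_maximalIdeal _).mpr (hnon i)

theorem Matrix.exists_mulVec_eq_zero_and_isUnit [IsDomain R] [IsPrincipalIdealRing R]
    [IsLocalRing R] [Fintype ι] [DecidableEq ι] {M : Matrix ι ι R} (hM : M.det = 0) :
    ∃ u : ι → R, M *ᵥ u = 0 ∧ ∃ i, IsUnit (u i) := by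
  obtain ⟨w, hw0, hMw⟩ := exists_mulVec_eq_zero_iff.mpr hM
  obtain ⟨d, hd0, u, rfl, hspan⟩ := exists_eq_smul_and_span_range_eq_top hw0
  rw [mulVec_smul, smul_eq_zero] at hMw
  exact ⟨u, hMw.resolve_left hd0, exists_isUnit_of_span_range_eq_top hspan⟩

end Primitive

section Orthogonal

variable {R : Type*} [CommRing R] {ι : Type*} [Fintype ι] {J A : Matrix ι ι R}

theorem Matrix.det_sub_one_eq_zero_of_transpose_mul_mul_eq [NoZeroDivisors R] [DecidableEq ι]
    (hodd : Odd (Fintype.card ι)) (h2 : (2 : R) ≠ 0) (hJ : J.det ≠ 0)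
    (hA : Aᵀ * J * A = J) (hdet : A.det = 1) : (A - 1).det = 0 := by
  have key : Aᵀ * J * (A - 1) = -((A - 1)ᵀ * J) := by
    rw [Matrix.mul_sub, Matrix.mul_one, hA, transpose_sub, Matrix.sub_mul, transpose_one,
      Matrix.one_mul, neg_sub]
  have hdets := congrArg det key
  rw [det_mul, det_mul, det_transpose, hdet, one_mul, det_neg, det_mul, det_transpose,
    hodd.neg_one_pow] at hdets
  have : (2 : R) * J.det * (A - 1).det = 0 := by linear_combination hdets
  simpa [h2, hJ] using this

theorem Matrix.vecMul_eq_of_transpose_mul_mul_eq (hA : Aᵀ * J * A = J) {u : ι → R}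
    (hu : A *ᵥ u = u) : (J *ᵥ u) ᵥ* A = J *ᵥ u :=
  calc (J *ᵥ u) ᵥ* A = (Aᵀ * J) *ᵥ (A *ᵥ u) := by
        rw [← mulVec_transpose, mulVec_mulVec, hu]
    _ = J *ᵥ u := by rw [mulVec_mulVec, hA]

end Orthogonal

def antidiagForm (R : Type*) [CommRing R] (n : ℕ) :
    Matrix (Fin (2 * n + 1)) (Fin (2 * n + 1)) R :=
  Matrix.of fun i j => if (i : ℕ) + (j : ℕ) = 2 * n then (-1 : R) ^ (i : ℕ) else 0

section Antidiag

variable {R : Type*} [CommRing R] {n : ℕ}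

theorem antidiagForm_mulVec_apply (v : Fin (2 * n + 1) → R) {i j : Fin (2 * n + 1)}
    (hij : (i : ℕ) + j = 2 * n) : (antidiagForm R n *ᵥ v) i = (-1) ^ (i : ℕ) * v j := by
  rw [mulVec, dotProduct, Finset.sum_eq_single j]
  · simp [antidiagForm, hij]
  · intro l _ hl
    simp only [antidiagForm, of_apply]
    rw [if_neg (fun h => hl (Fin.ext (by omega))), zero_mul]
  · exact fun h => absurd (Finset.mem_univ j) h

theorem antidiagForm_mul_self : antidiagForm R n * antidiagForm R n = 1 := by
  ext i j
  have hi := i.isLt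
  change (antidiagForm R n *ᵥ fun l => antidiagForm R n l j) i = _
  rw [antidiagForm_mulVec_apply _ (j := ⟨2 * n - i, by omega⟩) (by simp; omega)]
  by_cases hij : i = j
  · subst hij
    simp only [antidiagForm, of_apply, one_apply_eq]
    rw [if_pos (by omega), ← pow_add, Nat.add_sub_cancel' (by omega), pow_mul, neg_one_sq,
      one_pow]
  · simp only [antidiagForm, of_apply, one_apply_ne hij]
    rw [if_neg (fun h => hij (Fin.ext (by omega))), mul_zero]

end Antidiag

section StrictlyUpper

variable {K : Type*} [Semiring K] {m : ℕ} {N : Matrix (Fin m) (Fin m) K}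

theorem superdiag_mul_eq_zero_of_mulVec_eq_zero (hN : ∀ i j, j ≤ i → N i j = 0)
    {x : Fin m → K} (hx : N *ᵥ x = 0) {i j : Fin m} (hij : (i : ℕ) + 1 = j)
    (hzero : ∀ l, j < l → x l = 0) : N i j * x j = 0 := by
  have hrow := congrFun hx i
  rwa [mulVec, dotProduct, Finset.sum_eq_single j] at hrow
  · intro l _ hl
    rcases lt_or_gt_of_ne hl with hlt | hgt
    · rw [hN i l (by omega), zero_mul]
    · rw [hzero l hgt, mul_zero]
  · exact fun h => absurd (Finset.mem_univ j) h

theorem mul_superdiag_eq_zero_of_vecMul_eq_zero (hN : ∀ i j, j ≤ i → N i j = 0)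
    {y : Fin m → K} (hy : y ᵥ* N = 0) {i j : Fin m} (hij : (i : ℕ) + 1 = j)
    (hzero : ∀ l, l < i → y l = 0) : y i * N i j = 0 := by
  have hcol := congrFun hy j
  rwa [vecMul, dotProduct, Finset.sum_eq_single i] at hcol
  · intro l _ hl
    rcases lt_or_gt_of_ne hl with hlt | hgt
    · rw [hzero l hlt, zero_mul]
    · rw [hN l j (by omega), mul_zero]
  · exact fun h => absurd (Finset.mem_univ i) h

variable [NoZeroDivisors K] {n : ℕ}

theorem eq_zero_of_mulVec_eq_zero_of_superdiag_ne_zero (hN : ∀ i j, j ≤ i → N i j = 0)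
    (hsuper : ∀ i j : Fin m, (i : ℕ) < n → (i : ℕ) + 1 = j → N i j ≠ 0)
    {x : Fin m → K} (hx : N *ᵥ x = 0)
    (htail : ∀ l : Fin m, n < l → x l = 0) (j : Fin m) (hj : 0 < (j : ℕ)) : x j = 0 := by
  induction j using WellFoundedGT.induction with
  | ind j ih =>
    by_cases hjn : n < (j : ℕ)
    · exact htail j hjn
    let i : Fin m := ⟨j - 1, by omega⟩
    have hij : (i : ℕ) + 1 = j := by simp [i]; omega
    have hNx := superdiag_mul_eq_zero_of_mulVec_eq_zero hN hx hij fun l hl => ih l hl (by omega)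
    exact (mul_eq_zero.mp hNx).resolve_left (hsuper i j (by simp [i]; omega) hij)

theorem eq_zero_of_vecMul_eq_zero_of_superdiag_ne_zero (hN : ∀ i j, j ≤ i → N i j = 0)
    (hsuper : ∀ i j : Fin m, (i : ℕ) < n → (i : ℕ) + 1 = j → N i j ≠ 0) (hnm : n < m)
    {y : Fin m → K} (hy : y ᵥ* N = 0) (i : Fin m) (hi : (i : ℕ) < n) : y i = 0 := by
  induction i using WellFoundedLT.induction with
  | ind i ih =>
    let j : Fin m := ⟨i + 1, by omega⟩
    have hyN := mul_superdiag_eq_zero_of_vecMul_eq_zero hN hy (j := j) rfl fun l hl =>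
      ih l hl (by omega)
    exact (mul_eq_zero.mp hyN).resolve_right (hsuper i j hi rfl)

end StrictlyUpper

theorem mem_maximalIdeal_of_mulVec_eq_self {R : Type*} [CommRing R] [IsLocalRing R] {n : ℕ}
    {h : Matrix (Fin (2 * n + 1)) (Fin (2 * n + 1)) R}
    (hSO : hᵀ * antidiagForm R n * h = antidiagForm R n)
    (hdiag : ∀ i, h i i - 1 ∈ maximalIdeal R)
    (hlow : ∀ i j : Fin (2 * n + 1), (j : ℕ) < i → h i j ∈ maximalIdeal R)
    (hsuper : ∀ i j : Fin (2 * n + 1), (i : ℕ) < n → (i : ℕ) + 1 = j →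
      h i j ∉ maximalIdeal R)
    {u : Fin (2 * n + 1) → R} (hu : h *ᵥ u = u) (j : Fin (2 * n + 1)) (hj : 0 < (j : ℕ)) :
    u j ∈ maximalIdeal R := by
  set N := (h - 1).map (residue R) with hNdef
  have hN : ∀ i j, j ≤ i → N i j = 0 := by
    intro i j hji
    rw [hNdef, map_apply, residue_eq_zero_iff]
    rcases eq_or_lt_of_le hji with rfl | hlt
    · simpa using hdiag j
    · rw [Matrix.sub_apply, one_apply_ne hlt.ne', sub_zero]
      exact hlow i j hlt
  have hNsuper : ∀ i j : Fin (2 * n + 1), (i : ℕ) < n → (i : ℕ) + 1 = j →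
      N i j ≠ 0 := by
    intro i j hi hij
    rw [hNdef, map_apply, Matrix.sub_apply, one_apply_ne (by omega), sub_zero, Ne,
      residue_eq_zero_iff]
    exact hsuper i j hi hij
  have hx : N *ᵥ (residue R ∘ u) = 0 := by
    ext i
    simp [hNdef, ← RingHom.map_mulVec, sub_mulVec, hu]
  have hy : (residue R ∘ (antidiagForm R n *ᵥ u)) ᵥ* N = 0 := by
    ext i
    simp [hNdef, ← RingHom.map_vecMul, vecMul_sub, vecMul_eq_of_transpose_mul_mul_eq hSO hu]
  have htail : ∀ l : Fin (2 * n + 1), n < l → residue R (u l) = 0 := by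
    intro l hl
    have hy0 := eq_zero_of_vecMul_eq_zero_of_superdiag_ne_zero hN hNsuper (by omega) hy
      ⟨2 * n - l, by omega⟩ (by simp; omega)
    rw [Function.comp_apply, antidiagForm_mulVec_apply u (j := l) (by simp; omega), map_mul,
      map_pow, map_neg, map_one] at hy0
    exact (mul_eq_zero.mp hy0).resolve_left (pow_ne_zero _ (neg_ne_zero.mpr one_ne_zero))
  exact (residue_eq_zero_iff _).mp
    (eq_zero_of_mulVec_eq_zero_of_superdiag_ne_zero hN hNsuper hx htail j hj)

/-- Let O be the ring of integers of a p-adic field with odd residue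
characteristic (modeled by a DVR R with 2 ∉ 𝔪), with uniformizer ϖ. Let
h ∈ SO_{2n+1}(O) (for the antidiagonal form J with (i, 2n+2-i)-entry
(-1)^{i+1}) be an affine generic element of the pro-unipotent Iwahori radical:
diagonal entries ≡ 1 mod 𝔪, below-diagonal entries in 𝔪, superdiagonal
entries h_{1,2}, …, h_{n,n+1} not in 𝔪, and h_{2n,1} = ϖ·(unit). Then h has
an eigenvector v with eigenvalue 1, normalized so that v ∈ O^{2n+1}, v₁ = 1,
and v₂ ≡ ⋯ ≡ v_{2n+1} ≡ 0 mod 𝔪. -/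
theorem stmt13 {R : Type*} [CommRing R] [IsDomain R] [IsDiscreteValuationRing R]
    {n : ℕ}
    (h2 : (2 : R) ∉ IsLocalRing.maximalIdeal R)
    (J h : Matrix (Fin (2 * n + 1)) (Fin (2 * n + 1)) R)
    (hJ : J = Matrix.of fun (i j : Fin (2 * n + 1)) =>
      if (i : ℕ) + (j : ℕ) = 2 * n then (-1 : R) ^ (i : ℕ) else 0)
    (hSO : h.transpose * J * h = J) (hdet : h.det = 1)
    (hdiag : ∀ i, h i i - 1 ∈ IsLocalRing.maximalIdeal R)
    (hlow : ∀ i j : Fin (2 * n + 1), (j : ℕ) < (i : ℕ) → h i j ∈ IsLocalRing.maximalIdeal R)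
    (hgen1 : ∀ i j : Fin (2 * n + 1), (i : ℕ) < n → (i : ℕ) + 1 = (j : ℕ) →
      h i j ∉ IsLocalRing.maximalIdeal R) :
    ∃ v : Fin (2 * n + 1) → R, h.mulVec v = v ∧ v 0 = 1 ∧
      ∀ i : Fin (2 * n + 1), i ≠ 0 → v i ∈ IsLocalRing.maximalIdeal R := by
  replace hSO : hᵀ * antidiagForm R n * h = antidiagForm R n := by subst hJ; exact hSO
  have hJdet : (antidiagForm R n).det ≠ 0 :=
    (isUnit_det_of_left_inverse antidiagForm_mul_self).ne_zero
  have h2 : (2 : R) ≠ 0 := fun h0 => h2 (h0 ▸ zero_mem _)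
  obtain ⟨u, hu, i₀, hi₀⟩ := exists_mulVec_eq_zero_and_isUnit
    (det_sub_one_eq_zero_of_transpose_mul_mul_eq (by simp) h2 hJdet hSO hdet)
  have hfix : h *ᵥ u = u := by rwa [sub_mulVec, one_mulVec, sub_eq_zero] at hu
  have hmax := mem_maximalIdeal_of_mulVec_eq_self hSO hdiag hlow hgen1 hfix
  obtain rfl : i₀ = 0 := by
    by_contra hne
    exact (mem_maximalIdeal _).mp (hmax i₀ (Fin.pos_iff_ne_zero.mpr hne)) hi₀
  obtain ⟨c, hc⟩ := hi₀.exists_left_inv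
  refine ⟨c • u, by rw [mulVec_smul, hfix], by simp [hc], fun i hi => ?_⟩
  simpa using Ideal.mul_mem_left _ c (hmax i (Fin.pos_iff_ne_zero.mpr hi))
end

section
/- In GL_{2n} with θ(g) = J ᵗg^{-1} J^{-1} and g ∈ GL_{2n}(\bar F) semisimple with N(g) = g θ(g) regular semisimple: if g θ(g) = θ(g) g, then there exists x ∈ GL_{2n}(\bar F) with x g θ(x)^{-1} diagonal; in particular g is θ-semisimple. -/
/-!
Since `g` and `θ(g)` commute, `N = g θ(g)` preserves the alternating form `J`: `N J Nᵀ = J`.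
Let the rows of `M` be left eigenvectors of `N`, with the distinct eigenvalues `μ i`. Then
`Q = M J Mᵀ` satisfies `μ i * μ j * Q i j = Q i j`; as `Q` is invertible and alternating, every
row of `Q` has an off-diagonal nonzero entry, so the eigenvalues split into pairs `{μ, μ⁻¹}` of
distinct eigenvalues. Ordering the eigenbasis so that paired eigenvalues sit at positions `i` and
`2n - 1 - i` makes `Q` antidiagonal, hence `Q J⁻¹` diagonal. Since `g` commutes with `N`, also
`M g M⁻¹` is diagonal, and `x = M` works: `x g J xᵀ J⁻¹ = (M g M⁻¹) (Q J⁻¹)`.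
-/

open Matrix Polynomial

namespace Equiv.Perm

variable {α : Type*} [Fintype α] [DecidableEq α]

theorem cycleType_eq_replicate_of_sq_eq_one {σ : Perm α} (hσ : σ ^ 2 = 1)
    (hfree : ∀ x, σ x ≠ x) : σ.cycleType = Multiset.replicate (Fintype.card α / 2) 2 := by
  have hsupp : σ.support = Finset.univ :=
    Finset.eq_univ_of_forall fun x => mem_support.mpr (hfree x)
  have hrep := cycleType_of_pow_prime_eq_one hσ
  have hsum := σ.sum_cycleType
  rw [hrep, Multiset.sum_replicate, smul_eq_mul, hsupp, Finset.card_univ] at hsum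
  rw [hrep, ← hsum, Nat.mul_div_cancel _ two_pos]

theorem isConj_of_sq_eq_one {σ τ : Perm α} (hσ : σ ^ 2 = 1) (hτ : τ ^ 2 = 1)
    (hσfree : ∀ x, σ x ≠ x) (hτfree : ∀ x, τ x ≠ x) : IsConj σ τ := by
  rw [isConj_iff_cycleType_eq, cycleType_eq_replicate_of_sq_eq_one hσ hσfree,
    cycleType_eq_replicate_of_sq_eq_one hτ hτfree]

-- The pairing `x ↦ y` is a fixed-point-free involution, hence conjugate to `τ` by cycle type.
theorem exists_perm_apply_mul_apply_eq_one {M : Type*} [CommMonoid M] {τ : Perm α}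
    (hτ : τ ^ 2 = 1) (hτfree : ∀ x, τ x ≠ x) {f : α → M} (hf : Function.Injective f)
    (hpair : ∀ x, ∃ y ≠ x, f x * f y = 1) :
    ∃ π : Perm α, ∀ x, f (π x) * f (π (τ x)) = 1 := by
  choose σ hσfree hσ using hpair
  have hσσ : Function.Involutive σ := fun x =>
    hf (left_inv_eq_right_inv (by rw [mul_comm, hσ]) (by rw [mul_comm, hσ]))
  obtain ⟨π, hπ⟩ := isConj_iff.mp <| isConj_of_sq_eq_one (σ := τ) (τ := hσσ.toPerm) hτ
    (by ext x; simp [sq, hσσ x]) hτfree hσfree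
  refine ⟨π, fun x => ?_⟩
  have hx : π (τ x) = σ (π x) := by simpa using congr($hπ (π x))
  rw [hx, hσ]

end Equiv.Perm

namespace Matrix

variable {ι : Type*} [Fintype ι]

theorem IsDiag.mul [DecidableEq ι] {R : Type*} [Semiring R] {A B : Matrix ι ι R}
    (ha : A.IsDiag) (hb : B.IsDiag) : (A * B).IsDiag := by
  rw [← ha.diagonal_diag, ← hb.diagonal_diag, diagonal_mul_diagonal]
  exact isDiag_diagonal _

theorem isDiag_mul_of_apply_ne_zero {R : Type*} [NonUnitalNonAssocSemiring R] {τ : ι → ι}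
    (hτ : Function.Involutive τ) {A B : Matrix ι ι R} (hA : ∀ i j, A i j ≠ 0 → j = τ i)
    (hB : ∀ i j, B i j ≠ 0 → j = τ i) : (A * B).IsDiag := by
  intro i j hij
  rw [mul_apply]
  refine Finset.sum_eq_zero fun k _ => ?_
  rcases eq_or_ne (A i k) 0 with hAik | hAik
  · rw [hAik, zero_mul]
  · have hBkj : B k j = 0 := by
      by_contra hBkj
      exact hij (by rw [hB k j hBkj, hA i k hAik, hτ])
    rw [hBkj, mul_zero]

theorem isDiag_of_mul_diagonal_eq [DecidableEq ι] {R : Type*} [CommRing R] [NoZeroDivisors R]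
    {d : ι → R} (hd : Function.Injective d) {C : Matrix ι ι R}
    (h : C * diagonal d = diagonal d * C) : C.IsDiag := by
  intro i j hij
  have hentry : C i j * (d j - d i) = 0 := by
    have := congr_fun₂ h i j
    rw [mul_diagonal, diagonal_mul] at this
    linear_combination this
  exact (mul_eq_zero.mp hentry).resolve_right (sub_ne_zero.mpr (hd.ne hij.symm))

theorem isDiag_mul_mul_inv_of_commute [DecidableEq ι] {K : Type*} [Field K]
    {M N g : Matrix ι ι K} {μ : ι → K} (hμ : Function.Injective μ) (hM : IsUnit M.det)
    (hMN : M * N = diagonal μ * M) (hgN : g * N = N * g) : (M * g * M⁻¹).IsDiag := by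
  have hΛ : diagonal μ = M * N * M⁻¹ := by
    rw [hMN, Matrix.mul_assoc, mul_nonsing_inv _ hM, Matrix.mul_one]
  refine isDiag_of_mul_diagonal_eq hμ ?_
  rw [hΛ]
  simp only [Matrix.mul_assoc, nonsing_inv_mul_cancel_left _ _ hM, ← Matrix.mul_assoc g N, hgN]

theorem exists_injective_isRoot_charpoly [DecidableEq ι] {K : Type*} [Field K] [IsAlgClosed K]
    (N : Matrix ι ι K) (h : Squarefree N.charpoly) :
    ∃ μ : ι → K, Function.Injective μ ∧ ∀ i, N.charpoly.IsRoot (μ i) := by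
  classical
  have hnodup : N.charpoly.roots.Nodup :=
    nodup_roots (PerfectField.separable_iff_squarefree.mpr h)
  have hcard : Fintype.card ι = Fintype.card N.charpoly.roots.toFinset := by
    rw [Fintype.card_coe, Multiset.toFinset_card_of_nodup hnodup,
      IsAlgClosed.card_roots_eq_natDegree, charpoly_natDegree_eq_dim]
  let e := Fintype.equivOfCardEq hcard
  refine ⟨fun i => e i, Subtype.coe_injective.comp e.injective, fun i => ?_⟩
  exact (mem_roots N.charpoly_monic.ne_zero).mp (Multiset.mem_toFinset.mp (e i).2)

theorem exists_mul_eq_diagonal_mul [DecidableEq ι] {K : Type*} [Field K] (N : Matrix ι ι K)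
    {μ : ι → K} (hμ : Function.Injective μ) (hroot : ∀ i, N.charpoly.IsRoot (μ i)) :
    ∃ M : Matrix ι ι K, IsUnit M.det ∧ M * N = diagonal μ * M := by
  have hev : ∀ i, Module.End.HasEigenvalue (toLin' Nᵀ) (μ i) := fun i => by
    rw [Module.End.hasEigenvalue_iff_isRoot_charpoly, charpoly_toLin', charpoly_transpose]
    exact hroot i
  choose v hv using fun i => (hev i).exists_hasEigenvector
  have hli := Module.End.eigenvectors_linearIndependent' _ μ hμ v hv
  refine ⟨Matrix.of v, (isUnit_iff_isUnit_det _).mp (linearIndependent_rows_iff_isUnit.mp hli),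
    ?_⟩
  ext i j
  have := congr_fun (hv i).apply_eq_smul j
  simp only [toLin'_apply, mulVec_transpose, Pi.smul_apply, smul_eq_mul] at this
  rw [diagonal_mul, of_apply, ← this]
  rfl

theorem mul_mul_transpose_eq_of_commute {R : Type*} [CommRing R] {J A B : Matrix ι ι R}
    (hJ : Jᵀ = -J) (hBA : B * J * Aᵀ = J) (hcomm : A * B = B * A) :
    A * B * J * (A * B)ᵀ = J := by
  have hAB : A * J * Bᵀ = J := by
    simpa [transpose_mul, hJ, Matrix.mul_assoc] using congrArg transpose hBA
  have hT : (A * B)ᵀ = Aᵀ * Bᵀ := by rw [hcomm, transpose_mul]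
  calc A * B * J * (A * B)ᵀ = A * (B * J * Aᵀ) * Bᵀ := by
        rw [hT]; simp only [Matrix.mul_assoc]
    _ = J := by rw [hBA, hAB]

theorem mul_eq_one_of_mul_mul_transpose_apply_ne_zero [DecidableEq ι] {R : Type*} [CommRing R]
    [NoZeroDivisors R] {J N M : Matrix ι ι R} {μ : ι → R} (hN : N * J * Nᵀ = J)
    (hMN : M * N = diagonal μ * M) {i j : ι} (h : (M * J * Mᵀ) i j ≠ 0) :
    μ i * μ j = 1 := by
  have hfix : diagonal μ * (M * J * Mᵀ) * diagonal μ = M * J * Mᵀ :=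
    calc diagonal μ * (M * J * Mᵀ) * diagonal μ
      _ = (diagonal μ * M) * J * (diagonal μ * M)ᵀ := by
          rw [transpose_mul, diagonal_transpose]; simp only [Matrix.mul_assoc]
      _ = M * (N * J * Nᵀ) * Mᵀ := by rw [← hMN, transpose_mul]; simp only [Matrix.mul_assoc]
      _ = M * J * Mᵀ := by rw [hN]
  have hentry := congr_fun₂ hfix i j
  rw [mul_diagonal, diagonal_mul] at hentry
  have : (M * J * Mᵀ) i j * (μ i * μ j - 1) = 0 := by linear_combination hentry
  exact sub_eq_zero.mp ((mul_eq_zero.mp this).resolve_left h)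

theorem exists_ne_apply_ne_zero_of_transpose_eq_neg [DecidableEq ι] {K : Type*} [Field K]
    [CharZero K] {Q : Matrix ι ι K} (hQ : IsUnit Q.det) (hskew : Qᵀ = -Q) (i : ι) :
    ∃ j ≠ i, Q i j ≠ 0 := by
  by_contra! h
  have hii : Q i i = 0 := CharZero.eq_neg_self_iff.mp (by simpa using congr_fun₂ hskew i i)
  refine hQ.ne_zero (det_eq_zero_of_row_eq_zero i fun j => ?_)
  rcases eq_or_ne j i with rfl | hji
  · exact hii
  · exact h j hji

theorem exists_ne_mul_eq_one_of_mul_mul_transpose_eq [DecidableEq ι] {K : Type*} [Field K]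
    [CharZero K] {J N M : Matrix ι ι K} {μ : ι → K} (hJT : Jᵀ = -J) (hJ : IsUnit J.det)
    (hN : N * J * Nᵀ = J) (hM : IsUnit M.det) (hMN : M * N = diagonal μ * M) (i : ι) :
    ∃ j ≠ i, μ i * μ j = 1 := by
  obtain ⟨j, hji, hQ⟩ := exists_ne_apply_ne_zero_of_transpose_eq_neg (Q := M * J * Mᵀ)
    (by simp only [det_mul, det_transpose]; exact (hM.mul hJ).mul hM)
    (by simp only [transpose_mul, transpose_transpose, hJT, Matrix.mul_neg, Matrix.neg_mul,
          Matrix.mul_assoc]) i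
  exact ⟨j, hji, mul_eq_one_of_mul_mul_transpose_apply_ne_zero hN hMN hQ⟩

theorem eq_of_mul_mul_transpose_apply_ne_zero [DecidableEq ι] {R : Type*} [CommRing R]
    [NoZeroDivisors R] {J N M : Matrix ι ι R} {μ : ι → R} (hN : N * J * Nᵀ = J)
    (hMN : M * N = diagonal μ * M) (hμ : Function.Injective μ) {τ : ι → ι}
    (hτ : ∀ i, μ i * μ (τ i) = 1) {i j : ι} (h : (M * J * Mᵀ) i j ≠ 0) : j = τ i :=
  hμ <| left_inv_eq_right_inv
    (by rw [mul_comm]; exact mul_eq_one_of_mul_mul_transpose_apply_ne_zero hN hMN h) (hτ i)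

end Matrix

theorem Fin.rev_ne_self_of_even {n : ℕ} (i : Fin (2 * n)) : Fin.rev i ≠ i := by
  intro h
  have := congrArg Fin.val h
  rw [Fin.val_rev] at this
  omega

theorem Fin.neg_one_pow_rev {R : Type*} [Ring R] {n : ℕ} (i : Fin (2 * n)) :
    (-1 : R) ^ (Fin.rev i : ℕ) = -(-1) ^ (i : ℕ) := by
  have hi := i.isLt
  rw [Fin.val_rev]
  rcases Nat.even_or_odd (i : ℕ) with ⟨k, hk⟩ | ⟨k, hk⟩
  · rw [Odd.neg_one_pow ⟨n - k - 1, by omega⟩, Even.neg_one_pow ⟨k, hk⟩]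
  · rw [Even.neg_one_pow ⟨n - k - 1, by omega⟩, Odd.neg_one_pow ⟨k, hk⟩, neg_neg]

namespace Matrix

-- The paper's `J`, with `(i, 2n+1-i)`-entry `(-1)^(i-1)`, reindexed from `0`.
def signedAntidiag (K : Type*) [Field K] (n : ℕ) : Matrix (Fin (2 * n)) (Fin (2 * n)) K :=
  Matrix.of fun i j => if (i : ℕ) + (j : ℕ) = 2 * n - 1 then (-1 : K) ^ (i : ℕ) else 0

variable {K : Type*} [Field K] {n : ℕ}

theorem signedAntidiag_apply (i j : Fin (2 * n)) :
    signedAntidiag K n i j = if j = Fin.rev i then (-1 : K) ^ (i : ℕ) else 0 := by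
  refine if_congr ?_ rfl rfl
  rw [Fin.ext_iff, Fin.val_rev]
  omega

theorem eq_rev_of_signedAntidiag_apply_ne_zero {i j : Fin (2 * n)}
    (h : signedAntidiag K n i j ≠ 0) : j = Fin.rev i := by
  by_contra hj
  exact h (by rw [signedAntidiag_apply, if_neg hj])

theorem signedAntidiag_transpose : (signedAntidiag K n)ᵀ = -signedAntidiag K n := by
  ext i j
  rw [transpose_apply, neg_apply, signedAntidiag_apply, signedAntidiag_apply]
  by_cases h : j = Fin.rev i
  · rw [if_pos (by rw [h, Fin.rev_rev]), if_pos h, h, Fin.neg_one_pow_rev]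
  · rw [if_neg (fun h' => h (by rw [h', Fin.rev_rev])), if_neg h, neg_zero]

theorem signedAntidiag_mul_self : signedAntidiag K n * signedAntidiag K n = -1 := by
  ext i j
  rw [mul_apply, Finset.sum_eq_single (Fin.rev i)
    (fun k _ hk => by rw [signedAntidiag_apply, if_neg hk, zero_mul]) (by simp),
    signedAntidiag_apply, signedAntidiag_apply, if_pos rfl, Fin.rev_rev, neg_apply, one_apply]
  by_cases h : j = i
  · rw [if_pos h, if_pos h.symm, Fin.neg_one_pow_rev, mul_neg, ← pow_add, ← two_mul,
      pow_mul, neg_one_sq, one_pow]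
  · rw [if_neg h, if_neg (Ne.symm h), mul_zero, neg_zero]

theorem isUnit_det_signedAntidiag : IsUnit (signedAntidiag K n).det :=
  isUnit_det_of_right_inverse (B := -signedAntidiag K n)
    (by rw [Matrix.mul_neg, signedAntidiag_mul_self, neg_neg])

theorem inv_signedAntidiag : (signedAntidiag K n)⁻¹ = -signedAntidiag K n :=
  inv_eq_right_inv (by rw [Matrix.mul_neg, signedAntidiag_mul_self, neg_neg])

end Matrix

theorem stmt17_general {K : Type*} [Field K] [IsAlgClosed K] [CharZero K]
    {n : ℕ}
    (J g : Matrix (Fin (2 * n)) (Fin (2 * n)) K)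
    (hJ : J = Matrix.of fun (i j : Fin (2 * n)) =>
      if (i : ℕ) + (j : ℕ) = 2 * n - 1 then (-1 : K) ^ (i : ℕ) else 0)
    (hg : IsUnit g.det)
    (hcomm : g * (J * (g.transpose)⁻¹ * J⁻¹) = (J * (g.transpose)⁻¹ * J⁻¹) * g)
    (hreg : Squarefree ((g * (J * (g.transpose)⁻¹ * J⁻¹)).charpoly)) :
    ∃ x : Matrix (Fin (2 * n)) (Fin (2 * n)) K, IsUnit x.det ∧
      (x * g * (J * x.transpose * J⁻¹)).IsDiag := by
  have hJT : Jᵀ = -J := by rw [hJ]; exact signedAntidiag_transpose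
  have hJu : IsUnit J.det := by rw [hJ]; exact isUnit_det_signedAntidiag
  have hJinv : J⁻¹ = -J := by rw [hJ]; exact inv_signedAntidiag
  have hJrev : ∀ i j, J i j ≠ 0 → j = Fin.rev i := by
    rw [hJ]; exact fun _ _ => eq_rev_of_signedAntidiag_apply_ne_zero
  set N := g * (J * gᵀ⁻¹ * J⁻¹) with hN
  have hNJ : N * J * Nᵀ = J := by
    refine mul_mul_transpose_eq_of_commute hJT ?_ hcomm
    rw [Matrix.mul_assoc _ J⁻¹, nonsing_inv_mul _ hJu, Matrix.mul_one, Matrix.mul_assoc,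
      nonsing_inv_mul _ (by rwa [det_transpose]), Matrix.mul_one]
  have hgN : g * N = N * g := by
    nth_rw 1 [hcomm]
    simp only [hN, Matrix.mul_assoc]
  obtain ⟨μ₀, hμ₀, hroot⟩ := exists_injective_isRoot_charpoly N hreg
  obtain ⟨M₀, hM₀, hM₀N⟩ := exists_mul_eq_diagonal_mul N hμ₀ hroot
  obtain ⟨π, hπ⟩ := Equiv.Perm.exists_perm_apply_mul_apply_eq_one (τ := Fin.revPerm)
    (by ext i; simp [sq]) Fin.rev_ne_self_of_even hμ₀
    (exists_ne_mul_eq_one_of_mul_mul_transpose_eq hJT hJu hNJ hM₀ hM₀N)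
  have hμ : Function.Injective (μ₀ ∘ π) := hμ₀.comp π.injective
  obtain ⟨M, hM, hMN⟩ := exists_mul_eq_diagonal_mul N hμ fun i => hroot (π i)
  have hQ : (M * J * Mᵀ * J⁻¹).IsDiag := by
    rw [hJinv, Matrix.mul_neg]
    exact (isDiag_mul_of_apply_ne_zero Fin.rev_involutive
      (fun _ _ => eq_of_mul_mul_transpose_apply_ne_zero hNJ hMN hμ hπ) hJrev).neg
  refine ⟨M, hM, ?_⟩
  have hsplit : M * g * (J * Mᵀ * J⁻¹) = M * g * M⁻¹ * (M * J * Mᵀ * J⁻¹) := by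
    simp only [Matrix.mul_assoc, nonsing_inv_mul_cancel_left _ _ hM]
  rw [hsplit]
  exact (isDiag_mul_mul_inv_of_commute hμ hM hMN hgN).mul hQ

/-- Let K be an algebraically closed field of characteristic zero, J the
antidiagonal matrix of size 2n with (i, 2n+1-i)-entry (-1)^{i-1}, and
θ(g) = J ᵗg⁻¹ J⁻¹.  If g ∈ GL_{2n}(K) is semisimple (diagonalizable),
commutes with θ(g), and N(g) = g·θ(g) is regular semisimple (its
characteristic polynomial is squarefree), then there exists x ∈ GL_{2n}(K)
with x·g·θ(x)⁻¹ diagonal; in particular g is θ-semisimple.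
(Note θ(x)⁻¹ = J ᵗx J⁻¹.) -/
theorem stmt17 {K : Type*} [Field K] [IsAlgClosed K] [CharZero K]
    {n : ℕ} (hn : 0 < n)
    (J g : Matrix (Fin (2 * n)) (Fin (2 * n)) K)
    (hJ : J = Matrix.of fun (i j : Fin (2 * n)) =>
      if (i : ℕ) + (j : ℕ) = 2 * n - 1 then (-1 : K) ^ (i : ℕ) else 0)
    (hg : IsUnit g.det)
    (hss : ∃ P : Matrix (Fin (2 * n)) (Fin (2 * n)) K,
      IsUnit P.det ∧ (P⁻¹ * g * P).IsDiag)
    (hcomm : g * (J * (g.transpose)⁻¹ * J⁻¹) = (J * (g.transpose)⁻¹ * J⁻¹) * g)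
    (hreg : Squarefree ((g * (J * (g.transpose)⁻¹ * J⁻¹)).charpoly)) :
    ∃ x : Matrix (Fin (2 * n)) (Fin (2 * n)) K, IsUnit x.det ∧
      (x * g * (J * x.transpose * J⁻¹)).IsDiag :=
  stmt17_general J g hJ hg hcomm hreg
end

section
/- For a finite field 𝔽_q of odd characteristic with nontrivial additive character ψ, and any h_1,…,h_n, h_{2n}, b ∈ 𝔽_q^×, the sum ∑_{t_1,…,t_n ∈ 𝔽_q^×} ψ((t_1/t_2)h_1 + ⋯ + (t_{n−1}/t_n)h_{n−1} + t_n h_n + (b/(t_1 t_2)) h_{2n}) equals the generalized Kloosterman sum Kl_{h_1 h_2² ⋯ h_n² h_{2n} b}^{n+1}(ψ; 1, 2, …, 2, 1). -/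
open Finset

section ConsecutiveRatios

variable {G : Type*} [CommGroup G] {n : ℕ}

def consecutiveRatios (t : Fin (n + 1) → G) : Fin (n + 1) → G :=
  Fin.snoc (fun k : Fin n => t k.castSucc / t k.succ) (t (Fin.last n))

@[simp]
lemma consecutiveRatios_castSucc (t : Fin (n + 1) → G) (k : Fin n) :
    consecutiveRatios t k.castSucc = t k.castSucc / t k.succ :=
  Fin.snoc_castSucc ..

@[simp]
lemma consecutiveRatios_last (t : Fin (n + 1) → G) :
    consecutiveRatios t (Fin.last n) = t (Fin.last n) :=
  Fin.snoc_last ..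

lemma consecutiveRatios_zero (t : Fin (n + 2) → G) : consecutiveRatios t 0 = t 0 / t 1 :=
  consecutiveRatios_castSucc t 0

lemma consecutiveRatios_injective :
    Function.Injective (consecutiveRatios : (Fin (n + 1) → G) → Fin (n + 1) → G) := by
  intro t u htu
  funext j
  induction j using Fin.reverseInduction with
  | last => simpa using congrFun htu (Fin.last n)
  | cast k ih =>
    have hk := congrFun htu k.castSucc
    rw [consecutiveRatios_castSucc, consecutiveRatios_castSucc, ih] at hk
    exact div_left_injective hk

lemma prod_div_succ (t : Fin (n + 1) → G) :
    ∏ k : Fin n, t k.castSucc / t k.succ = t 0 / t (Fin.last n) := by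
  induction n with
  | zero => simp
  | succ n ih =>
    rw [Fin.prod_univ_castSucc]
    simp_rw [Fin.succ_castSucc]
    rw [ih (fun i => t i.castSucc), Fin.succ_last, Fin.castSucc_zero, div_mul_div_cancel]

lemma prod_consecutiveRatios (t : Fin (n + 1) → G) : ∏ i, consecutiveRatios t i = t 0 := by
  rw [Fin.prod_univ_castSucc]
  simp only [consecutiveRatios_castSucc, consecutiveRatios_last, prod_div_succ, div_mul_cancel]

lemma prod_consecutiveRatios_succ (t : Fin (n + 2) → G) :
    ∏ k : Fin (n + 1), consecutiveRatios t k.succ = t 1 := by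
  have ht := prod_consecutiveRatios t
  rw [Fin.prod_univ_succ, consecutiveRatios_zero] at ht
  calc _ = (t 0 / t 1)⁻¹ * t 0 := eq_inv_mul_of_mul_eq ht
    _ = t 1 := by rw [inv_div, div_mul_cancel]

end ConsecutiveRatios

section SolutionsOfMonomialEquation

variable {F M : Type*} [Field F] [Fintype F] [DecidableEq F] [AddCommMonoid M] {n : ℕ}

lemma sum_filter_prod_pow_eq_sum_units {e : Fin (n + 1) → ℕ} (he : ∀ i, e i ≠ 0)
    (he_last : e (Fin.last n) = 1) {a : F} (ha : a ≠ 0) (f : (Fin (n + 1) → F) → M) :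
    ∑ x ∈ univ.filter (fun x : Fin (n + 1) → F => ∏ i, x i ^ e i = a), f x
      = ∑ y : Fin n → Fˣ,
          f (Fin.snoc (fun i => (y i : F)) (a / ∏ i, (y i : F) ^ e i.castSucc)) := by
  symm
  refine sum_nbij (fun y => Fin.snoc (fun i => (y i : F)) (a / ∏ i, (y i : F) ^ e i.castSucc))
    ?_ ?_ ?_ fun _ _ => rfl
  · intro y _
    have hP : ∏ i, (y i : F) ^ e i.castSucc ≠ 0 := prod_ne_zero_iff.mpr fun i _ => by simp
    simp [Fin.prod_univ_castSucc, he_last, mul_div_cancel₀ _ hP]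
  · intro y _ z _ hyz
    funext i
    exact Units.ext (by simpa using congrFun hyz i.castSucc)
  · intro x hx
    simp only [coe_filter, mem_univ, true_and, Set.mem_ofPred_eq] at hx
    have hx0 (i : Fin (n + 1)) : x i ≠ 0 := fun h0 => ha <| by
      rw [← hx]; exact prod_eq_zero (mem_univ i) (by simp [h0, he i])
    refine ⟨fun i => Units.mk0 _ (hx0 i.castSucc), by simp, ?_⟩
    funext j
    induction j using Fin.lastCases with
    | cast k => simp
    | last =>
      rw [Fin.prod_univ_castSucc, he_last, pow_one] at hx
      have hP : ∏ i : Fin n, x i.castSucc ^ e i.castSucc ≠ 0 :=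
        prod_ne_zero_iff.mpr fun i _ => pow_ne_zero _ (hx0 _)
      simp [← hx, mul_div_cancel_left₀ _ hP]

lemma Kl_eq_sum_units (ψ : AddChar F ℂ) {e : Fin (n + 1) → ℕ} (he : ∀ i, e i ≠ 0)
    (he_last : e (Fin.last n) = 1) {a : F} (ha : a ≠ 0) :
    Kl ψ (n + 1) e a
      = ∑ y : Fin n → Fˣ, ψ (∑ i, (y i : F) + a / ∏ i, (y i : F) ^ e i.castSucc) := by
  rw [Kl, sum_filter_prod_pow_eq_sum_units he he_last ha]
  simp [Fin.sum_univ_castSucc]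

end SolutionsOfMonomialEquation

def oneTwoOneWeights (n : ℕ) : Fin (n + 1) → ℕ :=
  fun i => if i = 0 ∨ i = Fin.last n then 1 else 2

lemma oneTwoOneWeights_ne_zero {n : ℕ} (i : Fin (n + 1)) : oneTwoOneWeights n i ≠ 0 := by
  unfold oneTwoOneWeights; split_ifs <;> norm_num

lemma oneTwoOneWeights_last (n : ℕ) : oneTwoOneWeights n (Fin.last n) = 1 := by
  simp [oneTwoOneWeights]

lemma prod_pow_oneTwoOneWeights_castSucc {M : Type*} [CommMonoid M] {m : ℕ}
    (y : Fin (m + 2) → M) :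
    ∏ i, y i ^ oneTwoOneWeights (m + 2) i.castSucc = y 0 * ∏ k : Fin (m + 1), y k.succ ^ 2 := by
  rw [Fin.prod_univ_succ]
  congr 1
  · simp [oneTwoOneWeights]
  · refine prod_congr rfl fun k _ => ?_
    simp [oneTwoOneWeights, (Fin.castSucc_lt_last _).ne]

theorem stmt19_general {F : Type*} [Field F] [Fintype F] [DecidableEq F]
    (ψ : AddChar F ℂ)
    (m : ℕ) (h : Fin (m + 2) → Fˣ) (h2n b : Fˣ) :
    ∑ t : Fin (m + 2) → Fˣ,
      ψ ((∑ i : Fin (m + 1), ((t i.castSucc : F) / (t i.succ : F)) * (h i.castSucc : F))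
          + (t (Fin.last (m + 1)) : F) * (h (Fin.last (m + 1)) : F)
          + ((b : F) / ((t 0 : F) * (t 1 : F))) * (h2n : F))
    = Kl ψ (m + 3)
        (fun i => if i = 0 ∨ i = Fin.last (m + 2) then 1 else 2)
        ((h 0 : F) * (∏ i : Fin (m + 1), (h i.succ : F) ^ 2) * (h2n : F) * (b : F)) := by
  have ha : (h 0 : F) * (∏ i : Fin (m + 1), (h i.succ : F) ^ 2) * h2n * b ≠ 0 := by
    simp [prod_ne_zero_iff]
  refine .trans ?_ (Kl_eq_sum_units ψ (e := oneTwoOneWeights (m + 2)) oneTwoOneWeights_ne_zero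
    (oneTwoOneWeights_last _) ha).symm
  refine Fintype.sum_bijective _
    ((Group.mulRight_bijective h).comp consecutiveRatios_injective.bijective_of_finite) _ _
    fun t => congrArg ψ ?_
  have ht1 : ∏ k : Fin (m + 1), (↑(consecutiveRatios t k.succ) : F) = t 1 := by
    rw [← Units.coe_prod, prod_consecutiveRatios_succ]
  simp only [Function.comp_apply, Pi.mul_apply, Units.val_mul, prod_pow_oneTwoOneWeights_castSucc,
    mul_pow, prod_mul_distrib, prod_pow, ht1, Fin.sum_univ_castSucc (n := m + 1),
    consecutiveRatios_castSucc, consecutiveRatios_last, consecutiveRatios_zero,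
    Units.val_div_eq_div_val]
  have hH : ∏ k : Fin (m + 1), (h k.succ : F) ≠ 0 := by simp [prod_ne_zero_iff]
  field_simp

/-- For odd q, a nontrivial additive character ψ, and units h₁, …, h_n, h_{2n}, b,
∑_{t₁,…,t_n ∈ 𝔽_q^×} ψ((t₁/t₂)h₁ + ⋯ + (t_{n-1}/t_n)h_{n-1} + t_n h_n + (b/(t₁t₂))h_{2n})
  = Kl_{h₁h₂²⋯h_n²h_{2n}b}^{n+1}(ψ; 1, 2, …, 2, 1).
Here n = m + 2 ≥ 2. -/
theorem stmt19 {F : Type*} [Field F] [Fintype F] [DecidableEq F]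
    (hchar : ringChar F ≠ 2)
    (ψ : AddChar F ℂ) (hψ : ψ ≠ 1)
    (m : ℕ) (h : Fin (m + 2) → Fˣ) (h2n b : Fˣ) :
    ∑ t : Fin (m + 2) → Fˣ,
      ψ ((∑ i : Fin (m + 1), ((t i.castSucc : F) / (t i.succ : F)) * (h i.castSucc : F))
          + (t (Fin.last (m + 1)) : F) * (h (Fin.last (m + 1)) : F)
          + ((b : F) / ((t 0 : F) * (t 1 : F))) * (h2n : F))
    = Kl ψ (m + 3)
        (fun i => if i = 0 ∨ i = Fin.last (m + 2) then 1 else 2)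
        ((h 0 : F) * (∏ i : Fin (m + 1), (h i.succ : F) ^ 2) * (h2n : F) * (b : F)) :=
  stmt19_general ψ m h h2n b
end
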